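/- If the lattice of downsets of a finite poset P admits a complete valuation, then P has order dimension at most 2. -/
import Mathlib


open Finset

variable (P : Type*) [PartialOrder P] [Fintype P] [DecidableEq P]

/-- The lattice of downsets (lower sets) of a finite poset `P`. -/
def DownSet : Type _ := {A : Finset P // IsLowerSet (↑A : Set P)}

variable {P}

instance : Lattice (DownSet P) :=
  Subtype.lattice (fun _ _ hA hB => by simpa [Finset.sup_eq_union] using hA.union hB)
    (fun _ _ hA hB => by simpa [Finset.inf_eq_inter] using hA.inter hB)

instance : OrderBot (DownSet P) :=
  Subtype.orderBot (by simp [Finset.bot_eq_empty, isLowerSet_empty])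

noncomputable instance : Fintype (DownSet P) :=
  Fintype.ofInjective Subtype.val Subtype.val_injective

/-- The valuation associated to a weight function `w`. -/
def vval (w : P → ℕ) (A : DownSet P) : ℕ := ∑ x ∈ A.1, w x

variable [DecidableRel ((· ≤ ·) : P → P → Prop)]

/-- The principal downset of `y`. -/
def pd (y : P) : DownSet P :=
  ⟨univ.filter (· ≤ y), by
    intro a b hba ha
    simp only [coe_filter, Set.mem_setOf_eq, mem_univ, true_and] at *
    exact hba.trans ha⟩

/-- The dual valuation evaluated on the principal upset of `x`. -/
def vup (w : P → ℕ) (x : P) : ℕ := ∑ z ∈ univ.filter (fun z => x ≤ z), w z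

/-- `T` is an initial segment for the valuation `v`. -/
def Initial (v : DownSet P → ℕ) (T : Set (DownSet P)) : Prop :=
  ∃ j, v '' T = {k | k < j}

/-- `T` is a final segment for the valuation `v`. -/
def Final (v : DownSet P → ℕ) (T : Set (DownSet P)) : Prop :=
  ∃ j, v '' T = {k | j ≤ k ∧ k < Fintype.card (DownSet P)}

/-- The set of arbitrary (nonempty) joins of elements of `T`. -/
def joinSet (T : Set (DownSet P)) : Set (DownSet P) :=
  {a | ∃ S : Finset (DownSet P), ↑S ⊆ T ∧ ∃ hS : S.Nonempty, a = S.sup' hS id}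

/-- The set of arbitrary (nonempty) meets of elements of `T`. -/
def meetSet (T : Set (DownSet P)) : Set (DownSet P) :=
  {a | ∃ S : Finset (DownSet P), ↑S ⊆ T ∧ ∃ hS : S.Nonempty, a = S.inf' hS id}

/-- A complete valuation: bijective onto `{0,…,|L|-1}`, join-closures of initial segments
are initial segments, meet-closures of final segments are final segments. -/
def IsCompleteValuation (w : P → ℕ) : Prop :=
  Set.BijOn (vval w) Set.univ {k | k < Fintype.card (DownSet P)} ∧
  (∀ T, Initial (vval w) T → Initial (vval w) (joinSet T)) ∧
  (∀ T, Final (vval w) T → Final (vval w) (meetSet T))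

/-- The complementary order from two linear orders: `x ≤' y` iff `le1 x y` and `le2 y x`. -/
def le'' (le1 le2 : P → P → Prop) (x y : P) : Prop := le1 x y ∧ le2 y x

/-- The number of chains (under the complementary order) with maximum element `y`. -/
noncomputable def chainCount (le1 le2 : P → P → Prop) (y : P) : ℕ :=
  Set.ncard {C : Finset P | y ∈ C ∧ (∀ a ∈ C, le'' le1 le2 a y) ∧
    ∀ a ∈ C, ∀ b ∈ C, le'' le1 le2 a b ∨ le'' le1 le2 b a}

/-- `{le1, le2}` is a realizer of `P`. -/
def IsRealizer (le1 le2 : P → P → Prop) : Prop :=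
  IsLinearOrder P le1 ∧ IsLinearOrder P le2 ∧ ∀ x y : P, x ≤ y ↔ le1 x y ∧ le2 x y
section CVAux
variable {P : Type*} [PartialOrder P] [Fintype P] [DecidableEq P]
variable [DecidableRel ((· ≤ ·) : P → P → Prop)]

lemma vval_mono (w : P → ℕ) {A B : DownSet P} (h : A ≤ B) : vval w A ≤ vval w B :=
  Finset.sum_le_sum_of_subset h

lemma vval_add (w : P → ℕ) (A B : DownSet P) :
    vval w (A ⊔ B) + vval w (A ⊓ B) = vval w A + vval w B := Finset.sum_union_inter

lemma mem_pd {y z : P} : z ∈ (pd y).1 ↔ z ≤ y := by simp [pd]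

/-- complement of the principal upset of `x`, as a downset -/
def Dz (x : P) : DownSet P :=
  ⟨univ.filter (fun u => ¬ x ≤ u), by
    intro a b hba ha
    simp only [coe_filter, Set.mem_setOf_eq, mem_univ, true_and] at *
    exact fun hxb => ha (hxb.trans hba)⟩

lemma mem_Dz {x z : P} : z ∈ (Dz x).1 ↔ ¬ x ≤ z := by simp [Dz]

/-- `pd z` with `z` removed -/
def pdm (z : P) : DownSet P :=
  ⟨(pd z).1.erase z, by
    intro a b hba ha
    simp only [coe_erase, Set.mem_diff, mem_coe, mem_pd, Set.mem_singleton_iff] at *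
    refine ⟨hba.trans ha.1, fun hbz => ha.2 ?_⟩
    subst hbz
    exact le_antisymm ha.1 hba⟩

lemma pdm_add (w : P → ℕ) (z : P) : vval w (pdm z) + w z = vval w (pd z) :=
  Finset.sum_erase_add _ _ (mem_pd.mpr le_rfl)

lemma mem_pdm {y z : P} : z ∈ (pdm y).1 ↔ z ≤ y ∧ z ≠ y := by
  simp [pdm, mem_pd, and_comm]

/-- `Dz z` with `z` inserted -/
def ins (z : P) : DownSet P :=
  ⟨insert z (Dz z).1, by
    intro a b hba ha
    simp only [coe_insert, Set.mem_insert_iff, mem_coe, mem_Dz] at *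
    rcases ha with rfl | ha
    · by_cases hz : a ≤ b
      · exact Or.inl (le_antisymm hba hz)
      · exact Or.inr hz
    · exact Or.inr fun hxb => ha (hxb.trans hba)⟩

lemma ins_add (w : P → ℕ) (z : P) : vval w (ins z) = w z + vval w (Dz z) :=
  Finset.sum_insert (by simp [mem_Dz])

lemma Dz_le_ins (z : P) : Dz z ≤ ins z := fun u hu => Finset.mem_insert_of_mem hu

variable {w : P → ℕ}

lemma vval_lt_card (hc : IsCompleteValuation w) (A : DownSet P) :
    vval w A < Fintype.card (DownSet P) := hc.1.1 (Set.mem_univ A)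

lemma vval_inj (hc : IsCompleteValuation w) {A B : DownSet P}
    (h : vval w A = vval w B) : A = B :=
  hc.1.2.1 (Set.mem_univ A) (Set.mem_univ B) h

lemma vval_surj (hc : IsCompleteValuation w) {k : ℕ}
    (hk : k < Fintype.card (DownSet P)) : ∃ A : DownSet P, vval w A = k := by
  obtain ⟨A, -, hA⟩ := hc.1.2.2 hk
  exact ⟨A, hA⟩

lemma w_pos (hc : IsCompleteValuation w) (z : P) : 0 < w z := by
  rcases Nat.eq_zero_or_pos (w z) with h0 | h; swap
  · exact h
  have : vval w (pdm z) = vval w (pd z) := by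
    have := pdm_add w z; omega
  have := vval_inj hc this
  have : z ∈ (pdm z).1 := this ▸ mem_pd.mpr le_rfl
  simp [mem_pdm] at this

end CVAux
section CVMain
set_option linter.unusedSectionVars false
variable {P : Type*} [PartialOrder P] [Fintype P] [DecidableEq P]
variable [DecidableRel ((· ≤ ·) : P → P → Prop)]
variable {w : P → ℕ}

lemma L1 (hc : IsCompleteValuation w) {x y : P} (hxy : ¬ x ≤ y)
    (ha : vval w (pd x) < vval w (pd y)) : w x < w y := by
  classical
  set j := vval w (pd y) with hj
  -- T₁ = downsets with value < j is an initial segment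
  have hT1 : Initial (vval w) {S | vval w S < j} := by
    refine ⟨j, ?_⟩
    ext k
    simp only [Set.mem_image, Set.mem_setOf_eq]
    constructor
    · rintro ⟨S, hS, rfl⟩; exact hS
    · intro hk
      obtain ⟨A, hA⟩ := vval_surj hc (hk.trans (vval_lt_card hc (pd y)))
      exact ⟨A, by rw [hA]; exact hk, hA⟩
  obtain ⟨m, hm⟩ := hc.2.1 _ hT1
  set 𝒯 : Finset (DownSet P) := Finset.univ.filter (fun S => vval w S < j) with h𝒯
  have mem𝒯 : ∀ S : DownSet P, S ∈ 𝒯 ↔ vval w S < j := by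
    intro S; simp [h𝒯]
  have h𝒯ne : 𝒯.Nonempty := ⟨pd x, (mem𝒯 _).mpr ha⟩
  set M : DownSet P := 𝒯.sup' h𝒯ne id with hM
  have hleM : ∀ S : DownSet P, vval w S < j → S ≤ M :=
    fun S hS => Finset.le_sup' id ((mem𝒯 S).mpr hS)
  -- y ∉ M
  have hyS : ∀ S : DownSet P, vval w S < j → y ∉ S.1 := by
    intro S hS hyS
    have : pd y ≤ S := fun u hu => S.2 (mem_pd.mp hu) hyS
    exact absurd (vval_mono w this) (by omega)
  have hyM : y ∉ M.1 := by
    refine Finset.sup'_induction (p := fun K : DownSet P => y ∉ K.1) h𝒯ne id (fun A hA B hB => ?_) (fun S hS => hyS S ((mem𝒯 S).mp hS))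
    intro hmem
    rcases Finset.mem_union.mp hmem with h | h
    · exact hA h
    · exact hB h
  have hMjoin : M ∈ joinSet {S | vval w S < j} :=
    ⟨𝒯, fun S hS => (mem𝒯 S).mp hS, h𝒯ne, rfl⟩
  -- key: vval M < j
  have hMlt : vval w M < j := by
    by_contra hge
    push_neg at hge
    have hMm : vval w M < m := by
      have : vval w M ∈ vval w '' joinSet {S | vval w S < j} := Set.mem_image_of_mem _ hMjoin
      rw [hm] at this; exact this
    have : j ∈ vval w '' joinSet {S | vval w S < j} := by
      rw [hm]; exact lt_of_le_of_lt hge hMm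
    obtain ⟨K, hK, hKj⟩ := this
    have hKpd : K = pd y := vval_inj hc (by rw [hKj])
    obtain ⟨S, hST, hSne, rfl⟩ := hK
    have : S.sup' hSne id ≤ M :=
      Finset.sup'_le _ _ fun A hA => hleM A (hST hA)
    exact hyM (this (hKpd ▸ mem_pd.mpr le_rfl))
  -- pd y minus y is ≤ M
  have hpdmy : pdm y ≤ M := by
    refine hleM _ ?_
    have := pdm_add w y
    have := w_pos hc y
    omega
  -- M ⊓ pd y = pdm y
  have hMinf : M ⊓ pd y = pdm y := by
    apply Subtype.ext
    ext u
    constructor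
    · intro hu
      rcases Finset.mem_inter.mp hu with ⟨huM, hupd⟩
      refine mem_pdm.mpr ⟨mem_pd.mp hupd, fun h => ?_⟩
      exact hyM (h ▸ huM)
    · intro hu
      exact Finset.mem_inter.mpr ⟨hpdmy hu, mem_pd.mpr (mem_pdm.mp hu).1⟩
  -- q + w x ≤ vval (pd x)
  have hq : vval w (pd x ⊓ pd y) + w x ≤ vval w (pd x) := by
    have hsub : (pd x ⊓ pd y) ≤ pdm x := by
      intro u hu
      rcases Finset.mem_inter.mp hu with ⟨h1, h2⟩
      refine mem_pdm.mpr ⟨mem_pd.mp h1, fun h => hxy (h ▸ mem_pd.mp h2)⟩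
    have := vval_mono w hsub
    have := pdm_add w x
    omega
  have hadd1 := vval_add w (pd x) (pd y)
  have hadd2 := vval_add w M (pd y)
  rw [hMinf] at hadd2
  have hple : vval w (pd x ⊔ pd y) ≤ vval w (M ⊔ pd y) :=
    vval_mono w (sup_le_sup_right (hleM (pd x) ha) _)
  have hpdmadd := pdm_add w y
  omega

end CVMain
section CVMain2
set_option linter.unusedSectionVars false
variable {P : Type*} [PartialOrder P] [Fintype P] [DecidableEq P]
variable [DecidableRel ((· ≤ ·) : P → P → Prop)]
variable {w : P → ℕ}

lemma L2 (hc : IsCompleteValuation w) {x y : P} (hxy : ¬ x ≤ y)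
    (hb : vval w (Dz x) < vval w (Dz y)) : w y < w x := by
  classical
  set bx := vval w (Dz x) with hbx
  -- F = downsets with value > bx is a final segment
  have hF : Final (vval w) {S | bx < vval w S} := by
    refine ⟨bx + 1, ?_⟩
    ext k
    simp only [Set.mem_image, Set.mem_setOf_eq]
    constructor
    · rintro ⟨S, hS, rfl⟩; exact ⟨hS, vval_lt_card hc S⟩
    · rintro ⟨hk1, hk2⟩
      obtain ⟨A, hA⟩ := vval_surj hc hk2
      exact ⟨A, by rw [hA]; omega, hA⟩
  obtain ⟨m, hm⟩ := hc.2.2 _ hF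
  -- every downset with value > bx contains x
  have hxS : ∀ S : DownSet P, bx < vval w S → x ∈ S.1 := by
    intro S hS
    by_contra hxn
    have : S ≤ Dz x := by
      intro u hu
      refine mem_Dz.mpr fun hle => hxn (S.2 hle hu)
    exact absurd (vval_mono w this) (by omega)
  set 𝒮 : Finset (DownSet P) := Finset.univ.filter (fun S => bx < vval w S) with h𝒮
  have mem𝒮 : ∀ S : DownSet P, S ∈ 𝒮 ↔ bx < vval w S := by
    intro S; simp [h𝒮]
  have hinsx : bx < vval w (ins x) := by
    have := ins_add w x; have := w_pos hc x; omega
  have h𝒮ne : 𝒮.Nonempty := ⟨ins x, (mem𝒮 _).mpr hinsx⟩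
  set N : DownSet P := 𝒮.inf' h𝒮ne id with hN
  have hNle : ∀ S : DownSet P, bx < vval w S → N ≤ S :=
    fun S hS => Finset.inf'_le id ((mem𝒮 S).mpr hS)
  have hxN : x ∈ N.1 := by
    refine Finset.inf'_induction (p := fun K : DownSet P => x ∈ K.1) h𝒮ne id
      (fun A hA B hB => ?_) (fun S hS => hxS S ((mem𝒮 S).mp hS))
    exact Finset.mem_inter.mpr ⟨hA, hB⟩
  have hNmeet : N ∈ meetSet {S | bx < vval w S} :=
    ⟨𝒮, fun S hS => (mem𝒮 S).mp hS, h𝒮ne, rfl⟩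
  -- key: vval N > bx
  have hNgt : bx < vval w N := by
    by_contra hle
    push_neg at hle
    have hNm : m ≤ vval w N := by
      have : vval w N ∈ vval w '' meetSet {S | bx < vval w S} := Set.mem_image_of_mem _ hNmeet
      rw [hm] at this; exact this.1
    have : bx ∈ vval w '' meetSet {S | bx < vval w S} := by
      rw [hm]
      exact ⟨le_trans hNm hle, vval_lt_card hc (Dz x)⟩
    obtain ⟨K, hK, hKb⟩ := this
    have hKD : K = Dz x := vval_inj hc (by rw [hKb])
    obtain ⟨S, hST, hSne, rfl⟩ := hK
    have : N ≤ S.inf' hSne id :=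
      Finset.le_inf' _ _ fun A hA => hNle A (hST hA)
    have : x ∈ (Dz x).1 := hKD ▸ this hxN
    simp [mem_Dz] at this
  -- N ≤ ins x
  have hNins : N ≤ ins x := hNle _ hinsx
  -- sup bound : N ⊔ Dz x ≤ ins x
  have hs1 : vval w (N ⊔ Dz x) ≤ vval w (ins x) :=
    vval_mono w (sup_le hNins (Dz_le_ins x))
  have hadd1 := vval_add w N (Dz x)
  -- N ≤ Dz y
  have hNDy : N ≤ Dz y := hNle _ hb
  have hi12 : vval w (N ⊓ Dz x) ≤ vval w (Dz y ⊓ Dz x) :=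
    vval_mono w (inf_le_inf_right _ hNDy)
  have hadd2 := vval_add w (Dz y) (Dz x)
  -- ins y ≤ Dz y ⊔ Dz x
  have hs2 : vval w (ins y) ≤ vval w (Dz y ⊔ Dz x) := by
    refine vval_mono w ?_
    intro u hu
    rcases Finset.mem_insert.mp hu with rfl | hu
    · exact Finset.mem_union.mpr (Or.inr (mem_Dz.mpr hxy))
    · exact Finset.mem_union.mpr (Or.inl hu)
  have he1 := ins_add w x
  have he2 := ins_add w y
  omega

theorem stmt5' (h : ∃ w : P → ℕ, IsCompleteValuation w) :
    ∃ r₁ r₂ : P → P → Prop, IsLinearOrder P r₁ ∧ IsLinearOrder P r₂ ∧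
      ∀ x y : P, x ≤ y ↔ (r₁ x y ∧ r₂ x y) := by
  obtain ⟨w, hc⟩ := h
  refine ⟨fun u v => vval w (pd u) ≤ vval w (pd v),
          fun u v => vval w (Dz u) ≤ vval w (Dz v), ?_, ?_, ?_⟩
  · refine { refl := fun u => le_rfl, trans := fun u v t => le_trans,
             antisymm := fun u v h1 h2 => ?_, total := fun u v => Nat.le_total _ _ }
    have : pd u = pd v := vval_inj hc (le_antisymm h1 h2)
    have h1 : u ≤ v := mem_pd.mp (this ▸ mem_pd.mpr (le_refl u))
    have h2 : v ≤ u := mem_pd.mp (this.symm ▸ mem_pd.mpr (le_refl v))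
    exact le_antisymm h1 h2
  · refine { refl := fun u => le_rfl, trans := fun u v t => le_trans,
             antisymm := fun u v h1 h2 => ?_, total := fun u v => Nat.le_total _ _ }
    have hDeq : Dz u = Dz v := vval_inj hc (le_antisymm h1 h2)
    have ha1 : u ≤ v := by
      by_contra huv
      have hv : v ∈ (Dz u).1 := mem_Dz.mpr huv
      rw [hDeq] at hv
      exact (mem_Dz.mp hv) le_rfl
    have ha2 : v ≤ u := by
      by_contra hvu
      have hv : u ∈ (Dz v).1 := mem_Dz.mpr hvu
      rw [← hDeq] at hv
      exact (mem_Dz.mp hv) le_rfl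
    exact le_antisymm ha1 ha2
  · intro x y
    constructor
    · intro hxy
      constructor
      · exact vval_mono w fun u hu => mem_pd.mpr ((mem_pd.mp hu).trans hxy)
      · exact vval_mono w fun u hu => mem_Dz.mpr fun hle => (mem_Dz.mp hu) (hxy.trans hle)
    · rintro ⟨h1, h2⟩
      by_contra hxy
      have hne : x ≠ y := fun h => hxy (h ▸ le_rfl)
      have ha : vval w (pd x) < vval w (pd y) := by
        rcases lt_or_eq_of_le h1 with h | h
        · exact h
        · exact absurd (vval_inj hc h) (fun hp => hne (by
            have h1 : x ≤ y := mem_pd.mp (hp ▸ mem_pd.mpr (le_refl x))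
            exact absurd h1 hxy))
      have hbb : vval w (Dz x) < vval w (Dz y) := by
        rcases lt_or_eq_of_le h2 with h | h
        · exact h
        · exfalso
          have hDeq : Dz x = Dz y := vval_inj hc h
          have hv : y ∈ (Dz x).1 := mem_Dz.mpr hxy
          rw [hDeq] at hv
          exact (mem_Dz.mp hv) le_rfl
      have := L1 hc hxy ha
      have := L2 hc hxy hbb
      omega

end CVMain2

/-- If the downset lattice of a finite poset admits a complete valuation,
then the poset has order dimension at most 2. -/
theorem stmt5 (h : ∃ w : P → ℕ, IsCompleteValuation w) :
    ∃ r₁ r₂ : P → P → Prop, IsLinearOrder P r₁ ∧ IsLinearOrder P r₂ ∧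
      ∀ x y : P, x ≤ y ↔ (r₁ x y ∧ r₂ x y) := by
  exact stmt5' h
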